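/- Let w be a word of length n! over Σ_n. Then w is a universal Lyndon word of degree n if and only if every conjugate v of w is a Lyndon word with respect to the order ⊲_v that v defines (the order of first occurrences of the letters in v). -/

import Mathlib

/-- `v` is a conjugate (cyclic rotation) of `w` : `w = w₁w₂` and `v = w₂w₁`. -/
def IsConjugate {α : Type*} (w v : List α) : Prop :=
  ∃ w₁ w₂ : List α, w = w₁ ++ w₂ ∧ v = w₂ ++ w₁

/-- `u` is a cyclic factor of `w` : `u` is a factor of `ww` and `|u| ≤ |w|`. -/
def IsCyclicFactor {α : Type*} (w u : List α) : Prop :=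
  u <:+: (w ++ w) ∧ u.length ≤ w.length

/-- The number of occurrences of `u` as a cyclic factor of `w`, i.e. the number of
occurrences of `u` in `ww` beginning at one of the first `|w|` positions. -/
def cyclicOcc {α : Type*} [DecidableEq α] (w u : List α) : ℕ :=
  ((Finset.range w.length).filter fun i => u <+: (w ++ w).drop i).card

/-- `w` is lexicographically strictly smaller, with respect to the lexicographic order
induced by the order `r` on the letters, than all of its proper conjugates. -/
def IsLyndonWith {n : ℕ} (r : Fin n → Fin n → Prop) (w : List (Fin n)) : Prop :=
  ∀ w₁ w₂ : List (Fin n), w = w₁ ++ w₂ → w₁ ≠ [] → w₂ ≠ [] →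
    List.Lex r w (w₂ ++ w₁)

/-- `w` is a Lyndon word: it is Lyndon with respect to some total order on the alphabet. -/
def IsLyndon {n : ℕ} (w : List (Fin n)) : Prop :=
  ∃ r : Fin n → Fin n → Prop, IsStrictTotalOrder (Fin n) r ∧ IsLyndonWith r w

/-- A universal Lyndon word of degree `n` : a word over `Σ_n` of length `n!`
all of whose conjugates are Lyndon words. -/
def IsULW (n : ℕ) (w : List (Fin n)) : Prop :=
  w.length = Nat.factorial n ∧ ∀ v, IsConjugate w v → IsLyndon v

/-- The partial alphabet order `⊲_u` defined by the word `u` : `i ⊲_u j` iff `i` occurs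
in `u` and either `j` does not occur in `u`, or the first occurrence of `i` in `u`
precedes the first occurrence of `j` in `u`. -/
def wordOrder {n : ℕ} (u : List (Fin n)) (i j : Fin n) : Prop :=
  i ∈ u ∧ u.idxOf i < u.idxOf j


/-!
Let `v` be a conjugate of a universal Lyndon word, Lyndon for a total order `r`, and compare
it with a proper conjugate `v'`: they first differ where `v` has `a` and `v'` has `b`, with
`r a b`. If `b` occurred in `v` before that position, the conjugate of `v` starting at this
occurrence of `b` would be Lyndon for some order `q` with `q b a` (its first letter is minimal),
while comparing it with its rotation by the same amount as `v'` gives `q a b`. So the first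
occurrence of `a` precedes that of `b`, i.e. `a ⊲_v b`. Conversely, being Lyndon for `⊲_v`
passes to any total order extending `⊲_v`.
-/

theorem isConjugate_iff_isRotated {α : Type*} {w v : List α} :
    IsConjugate w v ↔ w ~r v := by
  constructor
  · rintro ⟨w₁, w₂, rfl, rfl⟩
    exact ⟨w₁.length, List.rotate_append_length_eq w₁ w₂⟩
  · rintro ⟨k, rfl⟩
    exact ⟨_, _, (w.take_append_drop (k % w.length)).symm, List.rotate_eq_drop_append_take_mod⟩

theorem IsConjugate.trans {α : Type*} {w v u : List α} (h₁ : IsConjugate w v)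
    (h₂ : IsConjugate v u) : IsConjugate w u :=
  isConjugate_iff_isRotated.2 <|
    (isConjugate_iff_isRotated.1 h₁).trans (isConjugate_iff_isRotated.1 h₂)

theorem isConjugate_rotate {α : Type*} (w : List α) (k : ℕ) : IsConjugate w (w.rotate k) :=
  isConjugate_iff_isRotated.2 ⟨k, rfl⟩

namespace List

variable {α : Type*} {r : α → α → Prop}

theorem exists_eq_append_cons_of_lex_of_length_eq {l₁ l₂ : List α} (h : Lex r l₁ l₂)
    (hlen : l₁.length = l₂.length) :
    ∃ p a s b t, l₁ = p ++ a :: s ∧ l₂ = p ++ b :: t ∧ r a b := by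
  induction h with
  | nil => simp at hlen
  | @cons x _ _ _ ih =>
    obtain ⟨p, a, s, b, t, rfl, rfl, hab⟩ := ih (by simpa using hlen)
    exact ⟨x :: p, a, s, b, t, rfl, rfl, hab⟩
  | @rel a s b t hab => exact ⟨[], a, s, b, t, rfl, rfl, hab⟩

theorem rel_of_lex_append_cons [Std.Irrefl r] {p s t : List α} {a b : α}
    (h : Lex r (p ++ a :: s) (p ++ b :: t)) (hab : a ≠ b) : r a b := by
  induction p with
  | nil => simpa [cons_lex_cons_iff, hab] using h
  | cons x p ih => exact ih (lex_cons_iff.1 h)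

theorem idxOf_lt_idxOf_append_cons [BEq α] [LawfulBEq α] {p s : List α} {a b : α}
    (hb : b ∉ p) (hab : a ≠ b) : (p ++ a :: s).idxOf a < (p ++ a :: s).idxOf b := by
  grind

end List

section Lyndon

variable {n : ℕ} {r s : Fin n → Fin n → Prop} {u : List (Fin n)}

theorem IsLyndonWith.mono (h : IsLyndonWith r u) (hrs : ∀ a b, r a b → s a b) :
    IsLyndonWith s u :=
  fun u₁ u₂ hu h₁ h₂ => List.Lex.imp hrs _ _ (h u₁ u₂ hu h₁ h₂)

theorem IsLyndonWith.lex_rotate (h : IsLyndonWith r u) {k : ℕ} (hk₀ : 0 < k)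
    (hk : k < u.length) : List.Lex r u (u.rotate k) := by
  rw [List.rotate_eq_drop_append_take hk.le]
  refine h _ _ (u.take_append_drop k).symm ?_ ?_ <;>
    simp [← List.length_pos_iff] <;> omega

theorem IsLyndonWith.rel_head_of_mem {b a : Fin n} (h : IsLyndonWith r (b :: u)) (ha : a ∈ u)
    (hab : a ≠ b) : r b a := by
  obtain ⟨u₁, u₂, rfl⟩ := List.append_of_mem ha
  have := h (b :: u₁) (a :: u₂) rfl (by simp) (by simp)
  simpa [List.cons_lex_cons_iff, hab.symm] using this

end Lyndon

section Universal

variable {n : ℕ} {v : List (Fin n)}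

theorem notMem_of_rotate_eq_append_cons (H : ∀ u, IsConjugate v u → IsLyndon u)
    {m : ℕ} (hm₀ : 0 < m) (hm : m < v.length) {p s t : List (Fin n)} {a b : Fin n}
    (hv : v = p ++ a :: s) (hvm : v.rotate m = p ++ b :: t) (hab : a ≠ b) : b ∉ p := by
  intro hb
  obtain ⟨p₁, p₂, rfl⟩ := List.append_of_mem hb
  have hrot : ∀ c l, (p₁ ++ b :: p₂ ++ c :: l).rotate p₁.length = b :: p₂ ++ c :: l ++ p₁ :=
    fun c l => by simp [List.rotate_append_length_eq]
  obtain ⟨q, hq, hL⟩ := H _ (isConjugate_rotate v p₁.length)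
  rw [hv, hrot] at hL
  have hba : q b a := hL.rel_head_of_mem (by simp) hab
  have hlex := hL.lex_rotate hm₀ (by simp [hv] at hm ⊢; omega)
  have hrot_m : (b :: p₂ ++ a :: s ++ p₁).rotate m = b :: p₂ ++ b :: t ++ p₁ := by
    rw [← hrot, List.rotate_rotate, Nat.add_comm, ← List.rotate_rotate, ← hv, hvm, hrot]
  rw [hrot_m] at hlex
  have hab' : q a b := List.rel_of_lex_append_cons (p := b :: p₂) (by simpa using hlex) hab
  exact (hq.toIrrefl.irrefl a) (hq.toIsTrans.trans _ _ _ hab' hba)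

theorem isLyndonWith_wordOrder (H : ∀ u, IsConjugate v u → IsLyndon u) :
    IsLyndonWith (wordOrder v) v := by
  intro v₁ v₂ hv h₁ h₂
  obtain ⟨r, hr, hL⟩ := H v ⟨[], v, rfl, by simp⟩
  have hm : v.rotate v₁.length = v₂ ++ v₁ := hv ▸ List.rotate_append_length_eq v₁ v₂
  obtain ⟨p, a, s, b, t, hvp, hcp, hab⟩ :=
    List.exists_eq_append_cons_of_lex_of_length_eq (hL v₁ v₂ hv h₁ h₂)
      (by simp [hv, Nat.add_comm])
  have hne : a ≠ b := fun h => hr.toIrrefl.irrefl a (h ▸ hab)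
  have hbp : b ∉ p := notMem_of_rotate_eq_append_cons H (List.length_pos_iff.2 h₁)
    (by simp [hv, List.length_pos_iff.2 h₂]) hvp (hm.trans hcp) hne
  have hord : wordOrder v a b := ⟨by simp [hvp], hvp ▸ List.idxOf_lt_idxOf_append_cons hbp hne⟩
  have := List.Lex.append_left _ (List.Lex.rel (l₁ := s) (l₂ := t) hord) p
  rwa [← hvp, ← hcp] at this

theorem exists_isStrictTotalOrder_forall_wordOrder (v : List (Fin n)) :
    ∃ r, IsStrictTotalOrder (Fin n) r ∧ ∀ i j, wordOrder v i j → r i j := by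
  let f : Fin n → ℕ ×ₗ Fin n := fun i => toLex (v.idxOf i, i)
  have hf : f.Injective := fun i j h => congrArg (·.2) (toLex.injective h)
  exact ⟨Function.onFun (· < ·) f, hf.isStrictTotalOrder_onFun (r := (· < ·)),
    fun i j h => Prod.Lex.lt_iff.2 (Or.inl h.2)⟩

end Universal

/-- Theorem: a word `w` of length `n!` over `Σ_n` is a universal Lyndon word iff every
conjugate `v` of `w` is Lyndon with respect to the order `⊲_v` that it defines. -/
theorem stmt_5 (n : ℕ) (w : List (Fin n)) (hlen : w.length = Nat.factorial n) :
    IsULW n w ↔ ∀ v : List (Fin n), IsConjugate w v → IsLyndonWith (wordOrder v) v := by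
  constructor
  · rintro ⟨-, hw⟩ v hwv
    exact isLyndonWith_wordOrder fun u hvu => hw u (hwv.trans hvu)
  · intro h
    refine ⟨hlen, fun v hwv => ?_⟩
    obtain ⟨r, hr, hext⟩ := exists_isStrictTotalOrder_forall_wordOrder v
    exact ⟨r, hr, (h v hwv).mono hext⟩
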